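/- (Lipschitz continuity of the TD limiting point, Proposition 4.1 in hypothesis form.) Let Θ be a normed vector space (parameter space) and for each θ ∈ Θ let ν_θ be a probability measure on a measurable space Ω. Let φ, ψ : Ω → ℝ^d be measurable with ‖φ(x)‖ ≤ 1 and ‖ψ(x)‖ ≤ 1 for all x, and r : Ω → ℝ measurable with |r(x)| ≤ U_r for all x. Define J(θ) := ∫ r dν_θ, A(θ) := ∫ φ(ψ − φ)ᵀ dν_θ, and b(θ) := ∫ (r(x) − J(θ)) φ(x) dν_θ(x). Assume (i) d_TV(ν_{θ₁}, ν_{θ₂}) ≤ K ‖θ₁ − θ₂‖ for all θ₁, θ₂ and some K > 0, and (ii) each A(θ) is invertible with ‖A(θ)⁻¹‖₂ ≤ 1/λ for some λ > 0. Then the map ω*(θ) := −A(θ)⁻¹ b(θ) is Lipschitz: for all θ₁, θ₂, ‖ω*(θ₁) − ω*(θ₂)‖ ≤ (8 λ⁻² + 6 λ⁻¹) U_r K ‖θ₁ − θ₂‖. -/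

import Mathlib

open MeasureTheory

/-- Total variation distance between two measures:
`d_TV(μ, ν) = sup_{A measurable} |μ(A) − ν(A)|`. -/
noncomputable def tvDist {Ω : Type*} [MeasurableSpace Ω] (μ ν : Measure Ω) : ℝ :=
  ⨆ A : {A : Set Ω // MeasurableSet A}, |(μ A.1).toReal - (ν A.1).toReal|

/-!
Write `Bᵢ = A(θᵢ)⁻¹` and `bᵢ = b(θᵢ)`. The resolvent identity `B₁ - B₂ = B₂ (A₂ - A₁) B₁` gives
`‖ω*(θ₁) - ω*(θ₂)‖ ≤ ‖B₁‖ ‖b₁ - b₂‖ + ‖B₂‖ ‖A₁ - A₂‖ ‖B₁‖ ‖b₂‖`.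
The integral of a function bounded by `M` moves by at most `2 M d_TV` when the measure changes:
for real functions by the layer-cake formula, for vector-valued ones by testing against a norming
functional. This yields `‖b₁ - b₂‖ ≤ 6 U_r d_TV`, `‖A₁ - A₂‖ ≤ 4 d_TV` and `‖b₂‖ ≤ 2 U_r`.
-/

open Set

section TotalVariation

variable {Ω : Type*} [MeasurableSpace Ω] {μ ν : Measure Ω}

lemma tvDist_nonneg (μ ν : Measure Ω) : 0 ≤ tvDist μ ν :=
  Real.iSup_nonneg fun _ => abs_nonneg _

lemma abs_measureReal_sub_le_tvDist [IsFiniteMeasure μ] [IsFiniteMeasure ν] {s : Set Ω}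
    (hs : MeasurableSet s) : |μ.real s - ν.real s| ≤ tvDist μ ν := by
  refine le_ciSup (f := fun A : {A : Set Ω // MeasurableSet A} => |μ.real A.1 - ν.real A.1|)
    ⟨μ.real univ + ν.real univ, ?_⟩ ⟨s, hs⟩
  rintro _ ⟨t, rfl⟩
  have hμ : μ.real t ≤ μ.real univ := measureReal_mono (subset_univ _)
  have hν : ν.real t ≤ ν.real univ := measureReal_mono (subset_univ _)
  have hμ₀ : 0 ≤ μ.real t := measureReal_nonneg
  have hν₀ : 0 ≤ ν.real t := measureReal_nonneg
  rw [abs_sub_le_iff]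
  constructor <;> linarith

lemma abs_integral_sub_le_mul_tvDist_of_nonneg_of_le [IsFiniteMeasure μ] [IsFiniteMeasure ν]
    {h : Ω → ℝ} (hm : Measurable h) {C : ℝ} (hC : 0 ≤ C) (h_nonneg : ∀ x, 0 ≤ h x)
    (h_le : ∀ x, h x ≤ C) :
    |∫ x, h x ∂μ - ∫ x, h x ∂ν| ≤ C * tvDist μ ν := by
  have layercake : ∀ (κ : Measure Ω) [IsFiniteMeasure κ],
      ∫ x, h x ∂κ = ∫ t in Ioc 0 C, κ.real {x | t ≤ h x} := fun κ _ =>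
    (Integrable.of_bound hm.aestronglyMeasurable C (ae_of_all _ fun x => by
      rw [Real.norm_of_nonneg (h_nonneg x)]; exact h_le x)).integral_eq_integral_Ioc_meas_le
      (ae_of_all _ h_nonneg) (ae_of_all _ h_le)
  have layers_integrable : ∀ (κ : Measure Ω) [IsFiniteMeasure κ],
      IntegrableOn (fun t => κ.real {x | t ≤ h x}) (Ioc 0 C) := by
    intro κ _
    have hanti : Antitone fun t => κ {x | t ≤ h x} :=
      fun _ _ hst => measure_mono fun _ hx => hst.trans hx
    refine Measure.integrableOn_of_bounded (M := κ.real univ) measure_Ioc_lt_top.ne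
      hanti.measurable.ennreal_toReal.aestronglyMeasurable (ae_of_all _ fun t => ?_)
    rw [Real.norm_of_nonneg measureReal_nonneg]
    exact measureReal_mono (subset_univ _)
  rw [layercake μ, layercake ν, ← integral_sub (layers_integrable μ) (layers_integrable ν),
    ← Real.norm_eq_abs]
  refine (norm_setIntegral_le_of_norm_le_const measure_Ioc_lt_top fun t _ =>
    abs_measureReal_sub_le_tvDist (hm measurableSet_Ici)).trans_eq ?_
  rw [Real.volume_real_Ioc_of_le hC, sub_zero, mul_comm]

lemma abs_integral_sub_le_two_mul_tvDist [IsProbabilityMeasure μ] [IsProbabilityMeasure ν]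
    {g : Ω → ℝ} (hm : Measurable g) {M : ℝ} (hg : ∀ x, |g x| ≤ M) :
    |∫ x, g x ∂μ - ∫ x, g x ∂ν| ≤ 2 * M * tvDist μ ν := by
  have hM : 0 ≤ M := (abs_nonneg _).trans (hg (nonempty_of_isProbabilityMeasure μ).some)
  have shift : ∀ (κ : Measure Ω) [IsProbabilityMeasure κ],
      ∫ x, (g x + M) ∂κ = ∫ x, g x ∂κ + M := fun κ _ => by
    rw [integral_add (Integrable.of_bound hm.aestronglyMeasurable M (ae_of_all _ hg))
      (integrable_const M), integral_const, probReal_univ, one_smul]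
  have := abs_integral_sub_le_mul_tvDist_of_nonneg_of_le (μ := μ) (ν := ν) (hm.add_const M)
    (C := 2 * M) (by linarith) (fun x => by linarith [neg_abs_le (g x), hg x])
    (fun x => by linarith [le_abs_self (g x), hg x])
  rwa [shift μ, shift ν, add_sub_add_right_eq_sub] at this

lemma norm_integral_sub_le_two_mul_tvDist {E : Type*} [NormedAddCommGroup E] [NormedSpace ℝ E]
    [CompleteSpace E] [IsProbabilityMeasure μ] [IsProbabilityMeasure ν] {f : Ω → E}
    (hm : StronglyMeasurable f) {M : ℝ} (hf : ∀ x, ‖f x‖ ≤ M) :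
    ‖∫ x, f x ∂μ - ∫ x, f x ∂ν‖ ≤ 2 * M * tvDist μ ν := by
  obtain ⟨L, hL, hLv⟩ := exists_dual_vector'' ℝ (∫ x, f x ∂μ - ∫ x, f x ∂ν)
  have hint : ∀ (κ : Measure Ω) [IsProbabilityMeasure κ], Integrable f κ := fun κ _ =>
    Integrable.of_bound hm.aestronglyMeasurable M (ae_of_all _ hf)
  have hLf : ∀ x, |L (f x)| ≤ M := fun x =>
    (L.le_of_opNorm_le hL (f x)).trans (by rw [one_mul]; exact hf x)
  calc ‖∫ x, f x ∂μ - ∫ x, f x ∂ν‖ = ∫ x, L (f x) ∂μ - ∫ x, L (f x) ∂ν := by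
        rw [L.integral_comp_comm (hint μ), L.integral_comp_comm (hint ν), ← map_sub]
        exact hLv.symm
    _ ≤ |∫ x, L (f x) ∂μ - ∫ x, L (f x) ∂ν| := le_abs_self _
    _ ≤ 2 * M * tvDist μ ν :=
        abs_integral_sub_le_two_mul_tvDist (L.continuous.comp_stronglyMeasurable hm).measurable hLf

end TotalVariation

lemma ContinuousLinearMap.norm_apply_sub_apply_le_of_comp_eq_id {𝕜 E F : Type*}
    [NontriviallyNormedField 𝕜] [NormedAddCommGroup E] [NormedSpace 𝕜 E]
    [NormedAddCommGroup F] [NormedSpace 𝕜 F] {A₁ A₂ : E →L[𝕜] F} {B₁ B₂ : F →L[𝕜] E}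
    (h₁ : A₁.comp B₁ = ContinuousLinearMap.id 𝕜 F) (h₂ : B₂.comp A₂ = ContinuousLinearMap.id 𝕜 E)
    (y₁ y₂ : F) :
    ‖B₁ y₁ - B₂ y₂‖ ≤ ‖B₁‖ * ‖y₁ - y₂‖ + ‖B₂‖ * ‖A₁ - A₂‖ * ‖B₁‖ * ‖y₂‖ := by
  have hA₁B₁ : A₁ (B₁ y₂) = y₂ := congr($h₁ y₂)
  have hB₂A₂ : B₂ (A₂ (B₁ y₂)) = B₁ y₂ := congr($h₂ (B₁ y₂))
  have key : B₁ y₁ - B₂ y₂ = B₁ (y₁ - y₂) + B₂ ((A₂ - A₁) (B₁ y₂)) := by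
    rw [map_sub, sub_apply, map_sub, hB₂A₂, hA₁B₁]
    abel
  calc ‖B₁ y₁ - B₂ y₂‖ ≤ ‖B₁ (y₁ - y₂)‖ + ‖B₂ ((A₂ - A₁) (B₁ y₂))‖ := key ▸ norm_add_le _ _
    _ ≤ ‖B₁‖ * ‖y₁ - y₂‖ + ‖B₂‖ * (‖A₂ - A₁‖ * (‖B₁‖ * ‖y₂‖)) := by
        gcongr
        · exact B₁.le_opNorm _
        · exact (B₂.le_opNorm _).trans
            (by gcongr; exact (A₂ - A₁).le_opNorm_of_le (B₁.le_opNorm _))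
    _ = ‖B₁‖ * ‖y₁ - y₂‖ + ‖B₂‖ * ‖A₁ - A₂‖ * ‖B₁‖ * ‖y₂‖ := by rw [norm_sub_rev A₂ A₁]; ring

lemma norm_sub_smul_le_two_mul {E : Type*} [SeminormedAddCommGroup E] [NormedSpace ℝ E]
    {a c U : ℝ} {v : E} (ha : |a| ≤ U) (hc : |c| ≤ U) (hv : ‖v‖ ≤ 1) :
    ‖(a - c) • v‖ ≤ 2 * U := by
  rw [norm_smul, Real.norm_eq_abs]
  calc |a - c| * ‖v‖ ≤ (|a| + |c|) * 1 := by gcongr; exact abs_sub _ _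
    _ ≤ 2 * U := by linarith

section TDTargets

variable {Ω E : Type*} [MeasurableSpace Ω] [NormedAddCommGroup E] [NormedSpace ℝ E]
  {μ ν : Measure Ω} [IsProbabilityMeasure μ] [IsProbabilityMeasure ν]
  {φ ψ : Ω → E} {r : Ω → ℝ} {Ur : ℝ}

lemma abs_integral_le_of_abs_le (hr : ∀ x, |r x| ≤ Ur) : |∫ x, r x ∂μ| ≤ Ur := by
  simpa [← Real.norm_eq_abs] using norm_integral_le_of_norm_le_const (μ := μ) (ae_of_all _ hr)

lemma norm_integral_centered_smul_le (hφ : ∀ x, ‖φ x‖ ≤ 1) (hr : ∀ x, |r x| ≤ Ur) :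
    ‖∫ x, (r x - ∫ y, r y ∂μ) • φ x ∂μ‖ ≤ 2 * Ur := by
  simpa using norm_integral_le_of_norm_le_const (μ := μ)
    (ae_of_all _ fun x => norm_sub_smul_le_two_mul (hr x) (abs_integral_le_of_abs_le hr) (hφ x))

lemma norm_integral_centered_smul_sub_le [CompleteSpace E] (hrm : Measurable r)
    (hφm : StronglyMeasurable φ) (hφ : ∀ x, ‖φ x‖ ≤ 1) (hr : ∀ x, |r x| ≤ Ur) :
    ‖∫ x, (r x - ∫ y, r y ∂μ) • φ x ∂μ - ∫ x, (r x - ∫ y, r y ∂ν) • φ x ∂ν‖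
      ≤ 6 * Ur * tvDist μ ν := by
  set c₁ := ∫ y, r y ∂μ
  set c₂ := ∫ y, r y ∂ν
  have hc₁ : |c₁| ≤ Ur := abs_integral_le_of_abs_le hr
  have hc₂ : |c₂| ≤ Ur := abs_integral_le_of_abs_le hr
  have integrable : ∀ c, |c| ≤ Ur → Integrable (fun x => (r x - c) • φ x) ν := fun c hc =>
    Integrable.of_bound
      ((hrm.sub measurable_const).stronglyMeasurable.smul hφm).aestronglyMeasurable (2 * Ur)
      (ae_of_all _ fun x => norm_sub_smul_le_two_mul (hr x) hc (hφ x))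
  have change_measure : ‖∫ x, (r x - c₁) • φ x ∂μ - ∫ x, (r x - c₁) • φ x ∂ν‖
      ≤ 2 * (2 * Ur) * tvDist μ ν :=
    norm_integral_sub_le_two_mul_tvDist ((hrm.sub measurable_const).stronglyMeasurable.smul hφm)
      fun x => norm_sub_smul_le_two_mul (hr x) hc₁ (hφ x)
  have change_centre : ‖∫ x, (r x - c₁) • φ x ∂ν - ∫ x, (r x - c₂) • φ x ∂ν‖
      ≤ 2 * Ur * tvDist μ ν := by
    rw [← integral_sub (integrable c₁ hc₁) (integrable c₂ hc₂)]
    simp_rw [← sub_smul, sub_sub_sub_cancel_left, integral_smul, norm_smul, Real.norm_eq_abs]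
    calc |c₂ - c₁| * ‖∫ x, φ x ∂ν‖ ≤ |c₁ - c₂| * 1 := by
          rw [abs_sub_comm]
          gcongr
          simpa using norm_integral_le_of_norm_le_const (μ := ν) (ae_of_all _ hφ)
      _ ≤ 2 * Ur * tvDist μ ν := by
          rw [mul_one]; exact abs_integral_sub_le_two_mul_tvDist hrm hr
  calc _ ≤ _ := norm_sub_le_norm_sub_add_norm_sub _ (∫ x, (r x - c₁) • φ x ∂ν) _
    _ ≤ 2 * (2 * Ur) * tvDist μ ν + 2 * Ur * tvDist μ ν := add_le_add change_measure change_centre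
    _ = 6 * Ur * tvDist μ ν := by ring

end TDTargets

lemma norm_integral_smulRight_sub_le {Ω E : Type*} [MeasurableSpace Ω] [NormedAddCommGroup E]
    [InnerProductSpace ℝ E] [CompleteSpace E] {μ ν : Measure Ω} [IsProbabilityMeasure μ]
    [IsProbabilityMeasure ν] {φ ψ : Ω → E} (hφm : StronglyMeasurable φ)
    (hψm : StronglyMeasurable ψ) (hφ : ∀ x, ‖φ x‖ ≤ 1) (hψ : ∀ x, ‖ψ x‖ ≤ 1) :
    ‖∫ x, (innerSL ℝ (ψ x - φ x)).smulRight (φ x) ∂μ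
      - ∫ x, (innerSL ℝ (ψ x - φ x)).smulRight (φ x) ∂ν‖ ≤ 4 * tvDist μ ν := by
  have hm : StronglyMeasurable fun x => (innerSL ℝ (ψ x - φ x)).smulRight (φ x) :=
    isBoundedBilinearMap_smulRight.continuous.comp_stronglyMeasurable
      (((innerSL ℝ).continuous.comp_stronglyMeasurable (hψm.sub hφm)).prodMk hφm)
  have bound : ∀ x, ‖(innerSL ℝ (ψ x - φ x)).smulRight (φ x)‖ ≤ 2 := fun x => by
    rw [ContinuousLinearMap.norm_smulRight_apply, innerSL_apply_norm]
    calc ‖ψ x - φ x‖ * ‖φ x‖ ≤ (‖ψ x‖ + ‖φ x‖) * 1 := by gcongr; exacts [norm_sub_le _ _, hφ x]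
      _ ≤ 2 := by linarith [hψ x, hφ x]
  linarith [norm_integral_sub_le_two_mul_tvDist (μ := μ) (ν := ν) hm bound]

theorem td_fixed_point_lipschitz_general {Θ Ω : Type*}
    [NormedAddCommGroup Θ] [MeasurableSpace Ω] {d : ℕ}
    (ν : Θ → Measure Ω) [∀ θ, IsProbabilityMeasure (ν θ)]
    (φ ψ : Ω → EuclideanSpace ℝ (Fin d)) (hφm : Measurable φ) (hψm : Measurable ψ)
    (hφ : ∀ x, ‖φ x‖ ≤ 1) (hψ : ∀ x, ‖ψ x‖ ≤ 1)
    (r : Ω → ℝ) (hrm : Measurable r) (Ur : ℝ) (hr : ∀ x, |r x| ≤ Ur)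
    (K lam : ℝ)
    (hTV : ∀ θ₁ θ₂ : Θ, tvDist (ν θ₁) (ν θ₂) ≤ K * ‖θ₁ - θ₂‖)
    (J : Θ → ℝ) (hJ : ∀ θ, J θ = ∫ x, r x ∂(ν θ))
    (A : Θ → (EuclideanSpace ℝ (Fin d) →L[ℝ] EuclideanSpace ℝ (Fin d)))
    (hA : ∀ θ, A θ = ∫ x, (innerSL ℝ (ψ x - φ x)).smulRight (φ x) ∂(ν θ))
    (b : Θ → EuclideanSpace ℝ (Fin d))
    (hb : ∀ θ, b θ = ∫ x, (r x - J θ) • φ x ∂(ν θ))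
    (Ainv : Θ → (EuclideanSpace ℝ (Fin d) →L[ℝ] EuclideanSpace ℝ (Fin d)))
    (hinv₁ : ∀ θ, (A θ).comp (Ainv θ) = ContinuousLinearMap.id ℝ (EuclideanSpace ℝ (Fin d)))
    (hinv₂ : ∀ θ, (Ainv θ).comp (A θ) = ContinuousLinearMap.id ℝ (EuclideanSpace ℝ (Fin d)))
    (hAinv : ∀ θ, ‖Ainv θ‖ ≤ 1 / lam)
    (ωstar : Θ → EuclideanSpace ℝ (Fin d)) (hω : ∀ θ, ωstar θ = -(Ainv θ (b θ))) :
    ∀ θ₁ θ₂ : Θ, ‖ωstar θ₁ - ωstar θ₂‖ ≤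
      (8 * lam⁻¹ ^ 2 + 6 * lam⁻¹) * Ur * K * ‖θ₁ - θ₂‖ := by
  intro θ₁ θ₂
  have hUr : 0 ≤ Ur := (abs_nonneg _).trans (hr (nonempty_of_isProbabilityMeasure (ν θ₁)).some)
  have hAinv' : ∀ θ, ‖Ainv θ‖ ≤ lam⁻¹ := by simpa only [one_div] using hAinv
  have hlam : 0 ≤ lam⁻¹ := (norm_nonneg _).trans (hAinv' θ₁)
  set T := tvDist (ν θ₁) (ν θ₂)
  have hT : 0 ≤ T := tvDist_nonneg _ _
  have hbT : ‖b θ₁ - b θ₂‖ ≤ 6 * Ur * T := by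
    simp only [hb, hJ]
    exact norm_integral_centered_smul_sub_le hrm hφm.stronglyMeasurable hφ hr
  have hb₂ : ‖b θ₂‖ ≤ 2 * Ur := by
    simp only [hb, hJ]
    exact norm_integral_centered_smul_le hφ hr
  have hAT : ‖A θ₁ - A θ₂‖ ≤ 4 * T := by
    simp only [hA]
    exact norm_integral_smulRight_sub_le hφm.stronglyMeasurable hψm.stronglyMeasurable hφ hψ
  calc ‖ωstar θ₁ - ωstar θ₂‖ = ‖Ainv θ₁ (b θ₁) - Ainv θ₂ (b θ₂)‖ := by
        rw [hω, hω, neg_sub_neg, norm_sub_rev]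
    _ ≤ ‖Ainv θ₁‖ * ‖b θ₁ - b θ₂‖ + ‖Ainv θ₂‖ * ‖A θ₁ - A θ₂‖ * ‖Ainv θ₁‖ * ‖b θ₂‖ :=
        ContinuousLinearMap.norm_apply_sub_apply_le_of_comp_eq_id (hinv₁ θ₁) (hinv₂ θ₂) _ _
    _ ≤ lam⁻¹ * (6 * Ur * T) + lam⁻¹ * (4 * T) * lam⁻¹ * (2 * Ur) := by
        gcongr <;> exact hAinv' _
    _ = (8 * lam⁻¹ ^ 2 + 6 * lam⁻¹) * Ur * T := by ring
    _ ≤ (8 * lam⁻¹ ^ 2 + 6 * lam⁻¹) * Ur * (K * ‖θ₁ - θ₂‖) := by gcongr; exact hTV θ₁ θ₂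
    _ = (8 * lam⁻¹ ^ 2 + 6 * lam⁻¹) * Ur * K * ‖θ₁ - θ₂‖ := by ring

/-- Lipschitz continuity of the TD(0) limiting point `ω*(θ) = −A(θ)⁻¹ b(θ)`:
if the family of distributions `ν_θ` is `K`-Lipschitz in total variation, the
feature maps are bounded by `1`, the reward by `U_r`, and each `A(θ)` is
invertible with `‖A(θ)⁻¹‖ ≤ 1/λ`, then
`‖ω*(θ₁) − ω*(θ₂)‖ ≤ (8 λ⁻² + 6 λ⁻¹) U_r K ‖θ₁ − θ₂‖`. -/
theorem td_fixed_point_lipschitz {Θ Ω : Type*}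
    [NormedAddCommGroup Θ] [NormedSpace ℝ Θ] [MeasurableSpace Ω] {d : ℕ}
    (ν : Θ → Measure Ω) [∀ θ, IsProbabilityMeasure (ν θ)]
    (φ ψ : Ω → EuclideanSpace ℝ (Fin d)) (hφm : Measurable φ) (hψm : Measurable ψ)
    (hφ : ∀ x, ‖φ x‖ ≤ 1) (hψ : ∀ x, ‖ψ x‖ ≤ 1)
    (r : Ω → ℝ) (hrm : Measurable r) (Ur : ℝ) (hr : ∀ x, |r x| ≤ Ur)
    (K lam : ℝ) (hK : 0 < K) (hlam : 0 < lam)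
    (hTV : ∀ θ₁ θ₂ : Θ, tvDist (ν θ₁) (ν θ₂) ≤ K * ‖θ₁ - θ₂‖)
    (J : Θ → ℝ) (hJ : ∀ θ, J θ = ∫ x, r x ∂(ν θ))
    (A : Θ → (EuclideanSpace ℝ (Fin d) →L[ℝ] EuclideanSpace ℝ (Fin d)))
    (hA : ∀ θ, A θ = ∫ x, (innerSL ℝ (ψ x - φ x)).smulRight (φ x) ∂(ν θ))
    (b : Θ → EuclideanSpace ℝ (Fin d))
    (hb : ∀ θ, b θ = ∫ x, (r x - J θ) • φ x ∂(ν θ))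
    (Ainv : Θ → (EuclideanSpace ℝ (Fin d) →L[ℝ] EuclideanSpace ℝ (Fin d)))
    (hinv₁ : ∀ θ, (A θ).comp (Ainv θ) = ContinuousLinearMap.id ℝ (EuclideanSpace ℝ (Fin d)))
    (hinv₂ : ∀ θ, (Ainv θ).comp (A θ) = ContinuousLinearMap.id ℝ (EuclideanSpace ℝ (Fin d)))
    (hAinv : ∀ θ, ‖Ainv θ‖ ≤ 1 / lam)
    (ωstar : Θ → EuclideanSpace ℝ (Fin d)) (hω : ∀ θ, ωstar θ = -(Ainv θ (b θ))) :
    ∀ θ₁ θ₂ : Θ, ‖ωstar θ₁ - ωstar θ₂‖ ≤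
      (8 * lam⁻¹ ^ 2 + 6 * lam⁻¹) * Ur * K * ‖θ₁ - θ₂‖ :=
  td_fixed_point_lipschitz_general ν φ ψ hφm hψm hφ hψ r hrm Ur hr K lam hTV J hJ A hA b hb Ainv
    hinv₁ hinv₂ hAinv ωstar hω
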